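/- arXiv:1904.05151 — 2 statements merged into one kernel-verified Lean document; each statement's English description precedes it below -/
import Mathlib

section
/- Let M be an irreducible nonnegative n×n real matrix, let u ∈ ℝⁿ be a vector with all coordinates positive, and let λ ∈ ℝ. If Mu ≤ λu entrywise and Mu ≠ λu, then ρ(M) < λ. -/
/-!
Replacing `u` by `w = ∑_{k ≤ N} Mᵏ u` turns the slack `λu - Mu`, nonnegative and nonzero, into
the slack `λw - Mw = ∑_{k ≤ N} Mᵏ (λu - Mu)`, which irreducibility makes positive in every
coordinate; hence `Mw ≤ μw` for some `μ < λ`. For an eigenpair `Mx = zx`, comparing `|x|` with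
`w` at a coordinate where `|xᵢ| / wᵢ` is maximal gives `|z| ≤ μ`.
-/

open Matrix Finset

namespace Matrix

variable {ι R : Type*} [Fintype ι]

theorem exists_mulVec_eq_smul_of_isRoot_charpoly {K : Type*} [Field K] [DecidableEq ι]
    {A : Matrix ι ι K} {z : K} (hz : A.charpoly.IsRoot z) :
    ∃ x : ι → K, x ≠ 0 ∧ A *ᵥ x = z • x := by
  rw [← charpoly_toLin', ← Module.End.hasEigenvalue_iff_isRoot_charpoly] at hz
  obtain ⟨x, hx⟩ := hz.exists_hasEigenvector
  exact ⟨x, hx.2, hx.apply_eq_smul⟩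

section Nonneg

variable [Semiring R] [PartialOrder R] [IsOrderedRing R] {A : Matrix ι ι R}

theorem mulVec_le_mulVec (hA : ∀ i j, 0 ≤ A i j) {v w : ι → R} (h : v ≤ w) :
    A *ᵥ v ≤ A *ᵥ w := fun i =>
  sum_le_sum fun j _ => mul_le_mul_of_nonneg_left (h j) (hA i j)

theorem mulVec_nonneg (hA : ∀ i j, 0 ≤ A i j) {v : ι → R} (hv : 0 ≤ v) : 0 ≤ A *ᵥ v := by
  simpa only [mulVec_zero] using mulVec_le_mulVec hA hv

theorem sum_pow_mulVec_pos [DecidableEq ι] [IsOrderedCancelAddMonoid R] [PosMulStrictMono R]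
    (hA : ∀ i j, 0 ≤ A i j) {N : ℕ} {j : ι} (hN : ∀ i, ∃ k < N, 0 < (A ^ k) i j)
    {v : ι → R} (hv : 0 ≤ v) (hvj : 0 < v j) (i : ι) : 0 < (∑ k ∈ range N, A ^ k *ᵥ v) i := by
  obtain ⟨k, hkN, hk⟩ := hN i
  rw [Finset.sum_apply]
  refine sum_pos' (fun k _ => mulVec_nonneg (pow_apply_nonneg hA k) hv i)
    ⟨k, mem_range.2 hkN, ?_⟩
  calc 0 < (A ^ k) i j * v j := mul_pos hk hvj
    _ ≤ ((A ^ k) *ᵥ v) i :=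
      single_le_sum (fun l _ => mul_nonneg (pow_apply_nonneg hA k i l) (hv l))
        (mem_univ j)

end Nonneg

theorem smul_sum_pow_mulVec_sub_mulVec [CommRing R] [DecidableEq ι] (A : Matrix ι ι R) (μ : R)
    (u : ι → R) (N : ℕ) :
    μ • (∑ k ∈ range N, A ^ k *ᵥ u) - A *ᵥ ∑ k ∈ range N, A ^ k *ᵥ u =
      ∑ k ∈ range N, A ^ k *ᵥ (μ • u - A *ᵥ u) := by
  rw [mulVec_sum, smul_sum, ← sum_sub_distrib]
  refine sum_congr rfl fun k _ => ?_
  rw [mulVec_sub, mulVec_smul, mulVec_mulVec, mulVec_mulVec, ← pow_succ, ← pow_succ']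

theorem exists_pos_mulVec_lt_smul [CommRing R] [PartialOrder R] [IsStrictOrderedRing R]
    [DecidableEq ι] {A : Matrix ι ι R} (hA : ∀ i j, 0 ≤ A i j)
    (hirr : ∀ i j, ∃ k, 0 < (A ^ k) i j) {u : ι → R} (hu : ∀ i, 0 < u i) {μ : R}
    (hle : ∀ i, (A *ᵥ u) i ≤ μ * u i) (hne : A *ᵥ u ≠ μ • u) :
    ∃ w : ι → R, (∀ i, 0 < w i) ∧ ∀ i, (A *ᵥ w) i < μ * w i := by
  obtain ⟨j, hj⟩ := Function.ne_iff.mp hne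
  choose K hK using fun i => hirr i j
  have hN : ∀ i, ∃ k < univ.sup K + 1, 0 < (A ^ k) i j :=
    fun i => ⟨K i, Nat.lt_succ_of_le (le_sup (mem_univ i)), hK i⟩
  have hv : 0 ≤ μ • u - A *ᵥ u := fun i => sub_nonneg.2 (hle i)
  have hvj : 0 < (μ • u - A *ᵥ u) j := sub_pos.2 ((hle j).lt_of_ne hj)
  refine ⟨_, sum_pow_mulVec_pos hA hN (fun i => (hu i).le) (hu j), fun i => ?_⟩
  have hslack := sum_pow_mulVec_pos hA hN hv hvj i
  rw [← smul_sum_pow_mulVec_sub_mulVec] at hslack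
  simpa [sub_pos] using hslack

theorem exists_lt_forall_mulVec_le [Field R] [LinearOrder R] [IsStrictOrderedRing R]
    [Nonempty ι] {A : Matrix ι ι R} (hA : ∀ i j, 0 ≤ A i j) {w : ι → R} (hw : ∀ i, 0 < w i)
    {μ : R} (h : ∀ i, (A *ᵥ w) i < μ * w i) :
    ∃ μ' < μ, 0 ≤ μ' ∧ ∀ i, (A *ᵥ w) i ≤ μ' * w i := by
  obtain ⟨i, hi⟩ := Finite.exists_max fun l => (A *ᵥ w) l / w l
  exact ⟨(A *ᵥ w) i / w i, (div_lt_iff₀ (hw i)).2 (h i),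
    div_nonneg (mulVec_nonneg hA (fun l => (hw l).le) i) (hw i).le,
    fun l => (div_le_iff₀ (hw l)).1 (hi l)⟩

theorem norm_mulVec_map_ofReal_le {A : Matrix ι ι ℝ} (hA : ∀ i j, 0 ≤ A i j) (x : ι → ℂ)
    (i : ι) : ‖(A.map Complex.ofReal *ᵥ x) i‖ ≤ (A *ᵥ fun j => ‖x j‖) i := by
  refine (norm_sum_le _ _).trans_eq (sum_congr rfl fun j _ => ?_)
  simp [abs_of_nonneg (hA i j)]

theorem norm_le_of_mulVec_eq_smul {A : Matrix ι ι ℝ} (hA : ∀ i j, 0 ≤ A i j) {w : ι → ℝ}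
    (hw : ∀ i, 0 < w i) {μ : ℝ} (hAw : ∀ i, (A *ᵥ w) i ≤ μ * w i) {z : ℂ} {x : ι → ℂ}
    (hx0 : x ≠ 0) (hx : A.map Complex.ofReal *ᵥ x = z • x) : ‖z‖ ≤ μ := by
  obtain ⟨j, hj⟩ := Function.ne_iff.mp hx0
  have : Nonempty ι := ⟨j⟩
  obtain ⟨i, hi⟩ := Finite.exists_max fun l => ‖x l‖ / w l
  set c := ‖x i‖ / w i
  have hxc : (fun l => ‖x l‖) ≤ c • w := fun l => (div_le_iff₀ (hw l)).1 (hi l)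
  have hxi : 0 < ‖x i‖ :=
    (div_pos_iff_of_pos_right (hw i)).1 ((div_pos (norm_pos_iff.2 hj) (hw j)).trans_le (hi j))
  refine le_of_mul_le_mul_right ?_ hxi
  calc ‖z‖ * ‖x i‖ = ‖(A.map Complex.ofReal *ᵥ x) i‖ := by simp [hx]
    _ ≤ (A *ᵥ fun l => ‖x l‖) i := norm_mulVec_map_ofReal_le hA x i
    _ ≤ (A *ᵥ (c • w)) i := mulVec_le_mulVec hA hxc i
    _ = c * (A *ᵥ w) i := by rw [mulVec_smul]; rfl
    _ ≤ c * (μ * w i) :=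
      mul_le_mul_of_nonneg_left (hAw i) (div_nonneg (norm_nonneg _) (hw i).le)
    _ = μ * ‖x i‖ := by rw [mul_left_comm, div_mul_cancel₀ _ (hw i).ne']

end Matrix

theorem spectral_radius_lt_of_strict_subEigen_general
    (n : ℕ) (M : Matrix (Fin n) (Fin n) ℝ)
    (hnonneg : ∀ i j, 0 ≤ M i j)
    (hirr : ∀ i j, ∃ k : ℕ, 1 ≤ k ∧ 0 < (M ^ k) i j)
    (u : Fin n → ℝ) (hu : ∀ i, 0 < u i) (lam : ℝ)
    (hle : ∀ i, M.mulVec u i ≤ lam * u i)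
    (hne : M.mulVec u ≠ fun i => lam * u i) :
    sSup {x : ℝ | ∃ z : ℂ,
      ((M.map (Complex.ofReal : ℝ → ℂ)).charpoly).IsRoot z ∧
      ‖z‖ = x} < lam := by
  obtain ⟨j, -⟩ := Function.ne_iff.mp hne
  have : Nonempty (Fin n) := ⟨j⟩
  obtain ⟨w, hw, hMw⟩ := exists_pos_mulVec_lt_smul hnonneg
    (fun i j => (hirr i j).imp fun _ => And.right) hu hle hne
  obtain ⟨μ, hμ, hμ0, hMwμ⟩ := exists_lt_forall_mulVec_le hnonneg hw hMw
  refine (Real.sSup_le ?_ hμ0).trans_lt hμ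
  rintro _ ⟨z, hz, rfl⟩
  obtain ⟨x, hx0, hx⟩ := exists_mulVec_eq_smul_of_isRoot_charpoly hz
  exact norm_le_of_mulVec_eq_smul hnonneg hw hMwμ hx0 hx

/-- If M is an irreducible nonnegative n×n real matrix, u a
positive vector and λ a real with Mu ≤ λu and Mu ≠ λu, then the spectral
radius of M (the maximum modulus of the complex roots of its characteristic
polynomial) is < λ. -/
theorem spectral_radius_lt_of_strict_subEigen
    (n : ℕ) (hn : 1 ≤ n) (M : Matrix (Fin n) (Fin n) ℝ)
    (hnonneg : ∀ i j, 0 ≤ M i j)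
    (hirr : ∀ i j, ∃ k : ℕ, 1 ≤ k ∧ 0 < (M ^ k) i j)
    (u : Fin n → ℝ) (hu : ∀ i, 0 < u i) (lam : ℝ)
    (hle : ∀ i, M.mulVec u i ≤ lam * u i)
    (hne : M.mulVec u ≠ fun i => lam * u i) :
    sSup {x : ℝ | ∃ z : ℂ,
      ((M.map (Complex.ofReal : ℝ → ℂ)).charpoly).IsRoot z ∧
      ‖z‖ = x} < lam :=
  spectral_radius_lt_of_strict_subEigen_general n M hnonneg hirr u hu lam hle hne
end

section
/- Let M be a nonnegative n×n real matrix (n ≥ 1). Then the Collatz–Wielandt formulae hold: ρ(M) = inf { λ > 0 : there exists a positive vector X ∈ ℝⁿ with MX ≤ λX }; there exists a nonzero nonnegative vector X with MX = ρ(M)·X, so that ρ(M) = max { λ ≥ 0 : ∃ X ∈ ℝ₊ⁿ \ {0}, MX = λX }; and ρ(M) = max { λ ≥ 0 : ∃ X ∈ ℝ₊ⁿ \ {0}, MX ≥ λX }. -/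
/-!
For an eigenvalue `z` of `M` with complex eigenvector `v`, the triangle inequality gives
`‖z‖ • |v| ≤ M |v|`, and a nonnegative sub-eigenvector `μ • u ≤ M u` can never beat a positive
super-eigenvector `M X ≤ ν • X` (compare them at the index maximising `u i / X i`), so `μ ≤ ν`.

For `t > ρ`, Gelfand's formula makes the Neumann series `∑ (M / t) ^ k` converge, so
`(t - M)⁻¹` exists and is entrywise nonnegative. Then `(t - M)⁻¹ 1` is a positive
super-eigenvector for `t`. Taking `u = |v|` for an eigenvalue of modulus `ρ`, the vector
`w = (t - M)⁻¹ u` satisfies `u ≤ (t - ρ) w`, so `w / ‖w‖` is a nonnegative approximate eigenvector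
for `ρ` with error at most `t - ρ`; compactness of the nonnegative part of the unit sphere turns
these into an exact one. Comparing with the super-eigenvectors for all `t > ρ` and with `|v|`
squeezes every Collatz–Wielandt bound onto `ρ`.
-/

open Filter

theorem summable_norm_pow_div_of_spectralRadius_lt {A : Type*} [NormedRing A] [NormedAlgebra ℂ A]
    [CompleteSpace A] {a : A} {t : ℝ} (ht : spectralRadius ℂ a < ENNReal.ofReal t) :
    Summable fun k => ‖a ^ k‖ / t ^ k := by
  obtain ⟨r, hr0, har, hrt⟩ := ENNReal.lt_iff_exists_real_btwn.mp ht
  have hrt' : r < t := (ENNReal.ofReal_lt_ofReal_iff'.mp hrt).1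
  have ht0 : 0 < t := hr0.trans_lt hrt'
  have hbound : ∀ᶠ k in atTop, ‖a ^ k‖ ≤ r ^ k := by
    filter_upwards [(spectrum.pow_norm_pow_one_div_tendsto_nhds_spectralRadius a).eventually
      (gt_mem_nhds har), eventually_ne_atTop 0] with k hk hk0
    have hlt : ‖a ^ k‖ ^ (1 / k : ℝ) < r :=
      (ENNReal.ofReal_lt_ofReal_iff_of_nonneg (by positivity)).mp hk
    calc ‖a ^ k‖ = (‖a ^ k‖ ^ (1 / k : ℝ)) ^ k := by
          rw [one_div, Real.rpow_inv_natCast_pow (norm_nonneg _) hk0]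
      _ ≤ r ^ k := by gcongr
  refine (summable_geometric_of_lt_one (div_nonneg hr0 ht0.le) ((div_lt_one ht0).mpr hrt')
    ).of_norm_bounded_eventually_nat ?_
  filter_upwards [hbound] with k hk
  rw [Real.norm_of_nonneg (by positivity), div_pow]
  gcongr

theorem spectralRadius_eq_ofReal_of_isGreatest {𝕜 A : Type*} [NormedField 𝕜] [Ring A]
    [Algebra 𝕜 A] {a : A} {r : ℝ} (h : IsGreatest (norm '' spectrum 𝕜 a) r) :
    spectralRadius 𝕜 a = ENNReal.ofReal r := by
  obtain ⟨⟨z, hz, rfl⟩, hub⟩ := h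
  refine le_antisymm (iSup₂_le fun w hw => ?_) (le_iSup₂_of_le z hz ?_) <;>
    rw [← ENNReal.ofReal_coe_nnreal, coe_nnnorm]
  exact ENNReal.ofReal_le_ofReal (hub ⟨w, hw, rfl⟩)

namespace Matrix

variable {ι : Type*} [Fintype ι]

theorem mulVec_mono_of_nonneg {M : Matrix ι ι ℝ} (hM : ∀ i j, 0 ≤ M i j) {u v : ι → ℝ}
    (huv : u ≤ v) : M *ᵥ u ≤ M *ᵥ v := fun i =>
  Finset.sum_le_sum fun j _ => mul_le_mul_of_nonneg_left (huv j) (hM i j)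

theorem mulVec_nonneg_of_nonneg {M : Matrix ι ι ℝ} (hM : ∀ i j, 0 ≤ M i j) {u : ι → ℝ}
    (hu : 0 ≤ u) : 0 ≤ M *ᵥ u := by
  simpa using mulVec_mono_of_nonneg hM hu

theorem le_of_smul_le_mulVec_of_mulVec_le_smul {M : Matrix ι ι ℝ} (hM : ∀ i j, 0 ≤ M i j)
    {u X : ι → ℝ} {μ ν : ℝ} (hu0 : 0 ≤ u) (hu : u ≠ 0) (hμ : μ • u ≤ M *ᵥ u)
    (hX : ∀ i, 0 < X i) (hν : M *ᵥ X ≤ ν • X) : μ ≤ ν := by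
  obtain ⟨j, hj⟩ := Function.ne_iff.mp hu
  obtain ⟨i, -, hi⟩ :=
    Finset.exists_max_image Finset.univ (fun i => u i / X i) ⟨j, Finset.mem_univ j⟩
  set c := u i / X i
  have hc : 0 < c :=
    (div_pos ((hu0 j).lt_of_ne' hj) (hX j)).trans_le (hi j (Finset.mem_univ j))
  have hui : u i = c * X i := (div_mul_cancel₀ _ (hX i).ne').symm
  have hucX : u ≤ c • X := fun l => by
    simpa [mul_comm] using (div_le_iff₀ (hX l)).mp (hi l (Finset.mem_univ l))
  have key : μ * u i ≤ ν * u i :=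
    calc μ * u i ≤ (M *ᵥ u) i := hμ i
      _ ≤ (M *ᵥ (c • X)) i := mulVec_mono_of_nonneg hM hucX i
      _ = c * (M *ᵥ X) i := by rw [mulVec_smul, Pi.smul_apply, smul_eq_mul]
      _ ≤ c * (ν * X i) := mul_le_mul_of_nonneg_left (hν i) hc.le
      _ = ν * u i := by rw [hui]; ring
  exact le_of_mul_le_mul_right key (hui ▸ mul_pos hc (hX i))

theorem smul_one_sub_mulVec {R : Type*} [CommRing R] [DecidableEq ι] (t : R) (M : Matrix ι ι R)
    (v : ι → R) : (t • 1 - M) *ᵥ v = t • v - M *ᵥ v := by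
  rw [sub_mulVec, smul_mulVec, one_mulVec]

theorem exists_norm_smul_le_mulVec_of_mem_spectrum [DecidableEq ι] {M : Matrix ι ι ℝ}
    (hM : ∀ i j, 0 ≤ M i j) {z : ℂ} (hz : z ∈ spectrum ℂ (M.map ((↑) : ℝ → ℂ))) :
    ∃ u : ι → ℝ, 0 ≤ u ∧ u ≠ 0 ∧ ‖z‖ • u ≤ M *ᵥ u := by
  rw [spectrum.mem_iff, Algebra.algebraMap_eq_smul_one, isUnit_iff_isUnit_det,
    isUnit_iff_ne_zero, not_not, ← exists_mulVec_eq_zero_iff] at hz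
  obtain ⟨v, hv0, hv⟩ := hz
  have hMv : M.map ((↑) : ℝ → ℂ) *ᵥ v = z • v := by
    rwa [smul_one_sub_mulVec, sub_eq_zero, eq_comm] at hv
  refine ⟨fun i => ‖v i‖, fun i => norm_nonneg _, ?_, fun i => ?_⟩
  · obtain ⟨i, hi⟩ := Function.ne_iff.mp hv0
    exact Function.ne_iff.mpr ⟨i, by simpa using hi⟩
  · calc ‖z‖ * ‖v i‖ = ‖(M.map ((↑) : ℝ → ℂ) *ᵥ v) i‖ := by
          rw [hMv, Pi.smul_apply, smul_eq_mul, norm_mul]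
      _ ≤ ∑ j, ‖(M i j : ℂ) * v j‖ := norm_sum_le _ _
      _ = (M *ᵥ fun i => ‖v i‖) i := by
        simp [mulVec, dotProduct, Complex.norm_real, abs_of_nonneg (hM _ _)]

section LinftyOpNorm

attribute [local instance] Matrix.linftyOpNormedAddCommGroup Matrix.linftyOpNormedRing
  Matrix.linftyOpNormedAlgebra

theorem linfty_opNorm_map_ofReal (M : Matrix ι ι ℝ) : ‖M.map ((↑) : ℝ → ℂ)‖ = ‖M‖ := by
  simp [linfty_opNorm_def]

theorem exists_nonneg_inverse_smul_one_sub [DecidableEq ι] {M : Matrix ι ι ℝ}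
    (hM : ∀ i j, 0 ≤ M i j) {t : ℝ}
    (ht : spectralRadius ℂ (M.map ((↑) : ℝ → ℂ)) < ENNReal.ofReal t) :
    ∃ R : Matrix ι ι ℝ, (∀ i j, 0 ≤ R i j) ∧ R * (t • 1 - M) = 1 ∧ (t • 1 - M) * R = 1 := by
  have ht0 : 0 < t := ENNReal.ofReal_pos.mp (bot_le.trans_lt ht)
  have hx : Summable fun k => (t⁻¹ • M) ^ k := by
    refine .of_norm ((summable_norm_pow_div_of_spectralRadius_lt ht).congr fun k => ?_)
    have hpow : M.map ((↑) : ℝ → ℂ) ^ k = (M ^ k).map ((↑) : ℝ → ℂ) :=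
      (map_pow (Complex.ofRealHom.mapMatrix : Matrix ι ι ℝ →+* Matrix ι ι ℂ) M k).symm
    rw [hpow, linfty_opNorm_map_ofReal, smul_pow, norm_smul,
      Real.norm_of_nonneg (by positivity : 0 ≤ t⁻¹ ^ k), inv_pow, div_eq_inv_mul]
  have hleft : (t⁻¹ • ∑' k, (t⁻¹ • M) ^ k) * (t • 1 - M) = 1 := by
    have h := hx.tsum_pow_mul_one_sub
    rwa [show t • (1 : Matrix ι ι ℝ) - M = t • (1 - t⁻¹ • M) by
      rw [smul_sub, smul_smul, mul_inv_cancel₀ ht0.ne', one_smul], smul_mul_smul_comm,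
      inv_mul_cancel₀ ht0.ne', one_smul]
  refine ⟨t⁻¹ • ∑' k, (t⁻¹ • M) ^ k, fun i j => ?_, hleft, mul_eq_one_comm.mp hleft⟩
  have hsum : (∑' k, (t⁻¹ • M) ^ k) i j = ∑' k, ((t⁻¹ • M) ^ k) i j :=
    (Pi.hasSum.mp (Pi.hasSum.mp hx.hasSum i) j).tsum_eq.symm
  rw [smul_apply, hsum, smul_eq_mul]
  refine mul_nonneg (inv_nonneg.mpr ht0.le) (tsum_nonneg fun k => ?_)
  exact pow_apply_nonneg (fun i j => mul_nonneg (inv_nonneg.mpr ht0.le) (hM i j)) k i j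

end LinftyOpNorm

theorem exists_pos_mulVec_le_smul [DecidableEq ι] {M : Matrix ι ι ℝ} (hM : ∀ i j, 0 ≤ M i j)
    {t : ℝ} (ht : spectralRadius ℂ (M.map ((↑) : ℝ → ℂ)) < ENNReal.ofReal t) :
    ∃ X : ι → ℝ, (∀ i, 0 < X i) ∧ M *ᵥ X ≤ t • X := by
  have ht0 : 0 < t := ENNReal.ofReal_pos.mp (bot_le.trans_lt ht)
  obtain ⟨R, hR, -, hRr⟩ := exists_nonneg_inverse_smul_one_sub hM ht
  set X := R *ᵥ 1
  have hMX : M *ᵥ X = t • X - 1 := by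
    have h : (t • 1 - M) *ᵥ X = 1 := by rw [mulVec_mulVec, hRr, one_mulVec]
    rw [← h, smul_one_sub_mulVec, sub_sub_cancel]
  refine ⟨X, fun i => ?_, hMX ▸ sub_le_self _ zero_le_one⟩
  have h := mulVec_nonneg_of_nonneg hM (mulVec_nonneg_of_nonneg hR zero_le_one) i
  rw [hMX] at h
  simp only [Pi.zero_apply, Pi.sub_apply, Pi.smul_apply, smul_eq_mul, Pi.one_apply] at h
  exact pos_of_mul_pos_right (by linarith) ht0.le

theorem le_of_smul_le_mulVec_of_spectralRadius_lt [DecidableEq ι] {M : Matrix ι ι ℝ}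
    (hM : ∀ i j, 0 ≤ M i j) {t : ℝ}
    (ht : spectralRadius ℂ (M.map ((↑) : ℝ → ℂ)) < ENNReal.ofReal t)
    {u : ι → ℝ} {μ : ℝ} (hu0 : 0 ≤ u) (hu : u ≠ 0) (hμ : μ • u ≤ M *ᵥ u) : μ ≤ t := by
  obtain ⟨X, hX, hMX⟩ := exists_pos_mulVec_le_smul hM ht
  exact le_of_smul_le_mulVec_of_mulVec_le_smul hM hu0 hu hμ hX hMX

theorem exists_approx_nonneg_eigenvector [DecidableEq ι] {M : Matrix ι ι ℝ}
    (hM : ∀ i j, 0 ≤ M i j) {ρ t : ℝ} (hρt : ρ ≤ t)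
    (ht : spectralRadius ℂ (M.map ((↑) : ℝ → ℂ)) < ENNReal.ofReal t)
    {u : ι → ℝ} (hu0 : 0 ≤ u) (hu : u ≠ 0) (hρu : ρ • u ≤ M *ᵥ u) :
    ∃ Y : ι → ℝ, 0 ≤ Y ∧ ‖Y‖ = 1 ∧ ‖M *ᵥ Y - ρ • Y‖ ≤ t - ρ := by
  obtain ⟨R, hR, hRl, hRr⟩ := exists_nonneg_inverse_smul_one_sub hM ht
  set w := R *ᵥ u
  have hw0 : 0 ≤ w := mulVec_nonneg_of_nonneg hR hu0
  have hMw : M *ᵥ w = t • w - u := by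
    have h : (t • 1 - M) *ᵥ w = u := by rw [mulVec_mulVec, hRr, one_mulVec]
    rw [← h, smul_one_sub_mulVec, sub_sub_cancel]
  have huw : u ≤ (t - ρ) • w := by
    calc u = R *ᵥ ((t • 1 - M) *ᵥ u) := by rw [mulVec_mulVec, hRl, one_mulVec]
      _ ≤ R *ᵥ ((t - ρ) • u) := mulVec_mono_of_nonneg hR (by
          rw [smul_one_sub_mulVec, sub_smul]; exact sub_le_sub_left hρu _)
      _ = (t - ρ) • w := mulVec_smul _ _ _
  have hwpos : 0 < ‖w‖ := by
    refine norm_pos_iff.mpr fun h => hu (le_antisymm ?_ hu0)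
    simpa [h] using huw
  refine ⟨‖w‖⁻¹ • w, smul_nonneg (by positivity) hw0, by
    rw [norm_smul, norm_inv, norm_norm, inv_mul_cancel₀ hwpos.ne'], ?_⟩
  have key : M *ᵥ (‖w‖⁻¹ • w) - ρ • ‖w‖⁻¹ • w = ‖w‖⁻¹ • ((t - ρ) • w - u) := by
    rw [mulVec_smul, hMw]; module
  rw [key, norm_smul, norm_inv, norm_norm, inv_mul_le_iff₀ hwpos,
    pi_norm_le_iff_of_nonneg (by positivity)]
  intro i
  have hwi : w i ≤ ‖w‖ := (Real.le_norm_self _).trans (norm_le_pi_norm w i)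
  have hui : u i ≤ (t - ρ) * w i := huw i
  have hu0i : 0 ≤ u i := hu0 i
  rw [Pi.sub_apply, Pi.smul_apply, smul_eq_mul, Real.norm_of_nonneg (by linarith)]
  nlinarith [mul_le_mul_of_nonneg_left hwi (sub_nonneg.mpr hρt)]

theorem exists_nonneg_eigenvector_of_forall_approx (M : Matrix ι ι ℝ) (ρ : ℝ)
    (h : ∀ ε > 0, ∃ Y : ι → ℝ, 0 ≤ Y ∧ ‖Y‖ = 1 ∧ ‖M *ᵥ Y - ρ • Y‖ ≤ ε) :
    ∃ Y : ι → ℝ, 0 ≤ Y ∧ ‖Y‖ = 1 ∧ M *ᵥ Y = ρ • Y := by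
  set K := Set.Ici (0 : ι → ℝ) ∩ Metric.sphere 0 1
  have hK : IsCompact K := (isCompact_sphere 0 1).inter_left isClosed_Ici
  obtain ⟨Y₁, hY₁, hY₁1, -⟩ := h 1 one_pos
  have hcont : Continuous fun Y : ι → ℝ => ‖M *ᵥ Y - ρ • Y‖ := by fun_prop
  obtain ⟨Y, ⟨hY0, hY1⟩, hmin⟩ :=
    hK.exists_isMinOn ⟨Y₁, hY₁, by simpa using hY₁1⟩ hcont.continuousOn
  refine ⟨Y, hY0, by simpa using hY1, sub_eq_zero.mp (norm_le_zero_iff.mp ?_)⟩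
  refine le_of_forall_gt_imp_ge_of_dense fun ε hε => ?_
  obtain ⟨Z, hZ0, hZ1, hZ⟩ := h ε hε
  exact (hmin ⟨hZ0, by simpa using hZ1⟩).trans hZ

theorem exists_nonneg_mulVec_eq_smul [DecidableEq ι] {M : Matrix ι ι ℝ} (hM : ∀ i j, 0 ≤ M i j)
    {ρ : ℝ} (hρ0 : 0 ≤ ρ) (hρ : spectralRadius ℂ (M.map ((↑) : ℝ → ℂ)) ≤ ENNReal.ofReal ρ)
    {u : ι → ℝ} (hu0 : 0 ≤ u) (hu : u ≠ 0) (hρu : ρ • u ≤ M *ᵥ u) :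
    ∃ Y : ι → ℝ, 0 ≤ Y ∧ Y ≠ 0 ∧ M *ᵥ Y = ρ • Y := by
  obtain ⟨Y, hY0, hY1, hY⟩ := exists_nonneg_eigenvector_of_forall_approx M ρ fun ε hε => by
    simpa using exists_approx_nonneg_eigenvector hM (le_add_of_nonneg_right hε.le)
      (hρ.trans_lt (ENNReal.ofReal_lt_ofReal_iff'.mpr ⟨by linarith, by linarith⟩)) hu0 hu hρu
  exact ⟨Y, hY0, fun h => by simp [h] at hY1, hY⟩

end Matrix

open Matrix

/-- Collatz–Wielandt formulae: For a nonnegative n×n real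
matrix M (n ≥ 1), with ρ(M) the spectral radius (the maximum modulus of the
complex roots of the characteristic polynomial):
ρ(M) = inf { λ > 0 : ∃ X positive, MX ≤ λX };
there is a nonzero nonnegative X with MX = ρ(M)X, so that
ρ(M) = max { λ ≥ 0 : ∃ X ∈ ℝ₊ⁿ \ {0}, MX = λX };
and ρ(M) = max { λ ≥ 0 : ∃ X ∈ ℝ₊ⁿ \ {0}, MX ≥ λX }. -/
theorem collatz_wielandt_formulae
    (n : ℕ) (hn : 1 ≤ n) (M : Matrix (Fin n) (Fin n) ℝ)
    (hnonneg : ∀ i j, 0 ≤ M i j)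
    (ρ : ℝ)
    (hρ : ρ = sSup {x : ℝ | ∃ z : ℂ,
      ((M.map (Complex.ofReal : ℝ → ℂ)).charpoly).IsRoot z ∧
      ‖z‖ = x}) :
    ρ = sInf {lam : ℝ | 0 < lam ∧ ∃ X : Fin n → ℝ,
      (∀ i, 0 < X i) ∧ ∀ i, M.mulVec X i ≤ lam * X i} ∧
    (∃ X : Fin n → ℝ, X ≠ 0 ∧ (∀ i, 0 ≤ X i) ∧
      (∀ i, M.mulVec X i = ρ * X i)) ∧
    IsGreatest {lam : ℝ | 0 ≤ lam ∧ ∃ X : Fin n → ℝ,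
      X ≠ 0 ∧ (∀ i, 0 ≤ X i) ∧ (∀ i, M.mulVec X i = lam * X i)} ρ ∧
    IsGreatest {lam : ℝ | 0 ≤ lam ∧ ∃ X : Fin n → ℝ,
      X ≠ 0 ∧ (∀ i, 0 ≤ X i) ∧ (∀ i, lam * X i ≤ M.mulVec X i)} ρ := by
  set A := M.map ((↑) : ℝ → ℂ)
  have : Nonempty (Fin n) := ⟨⟨0, hn⟩⟩
  have hmax : IsGreatest (norm '' spectrum ℂ A) ρ := by
    have hspec : {x : ℝ | ∃ z : ℂ, A.charpoly.IsRoot z ∧ ‖z‖ = x} = norm '' spectrum ℂ A := by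
      ext; simp [mem_spectrum_iff_isRoot_charpoly]
    rw [hρ, hspec]
    exact ((finite_spectrum A).image norm).isCompact.isGreatest_sSup
      ((spectrum.nonempty_of_isAlgClosed_of_finiteDimensional ℂ A).image norm)
  obtain ⟨z₀, hz₀, hz₀ρ⟩ := hmax.1
  have hρ0 : 0 ≤ ρ := hz₀ρ ▸ norm_nonneg z₀
  have hrad := (spectralRadius_eq_ofReal_of_isGreatest hmax).le
  have hlt : ∀ t, ρ < t → spectralRadius ℂ A < ENNReal.ofReal t := fun t ht =>
    hrad.trans_lt (ENNReal.ofReal_lt_ofReal_iff'.mpr ⟨ht, hρ0.trans_lt ht⟩)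
  obtain ⟨u, hu0, hu, hρu⟩ := exists_norm_smul_le_mulVec_of_mem_spectrum hnonneg hz₀
  rw [hz₀ρ] at hρu
  obtain ⟨Y, hY0, hY, hMY⟩ := exists_nonneg_mulVec_eq_smul hnonneg hρ0 hrad hu0 hu hρu
  have hYeig : ∀ i, (M *ᵥ Y) i = ρ * Y i := fun i => congrFun hMY i
  have hsub : ∀ μ, ∀ X : Fin n → ℝ, X ≠ 0 → 0 ≤ X → μ • X ≤ M *ᵥ X → μ ≤ ρ :=
    fun μ X hX hX0 hμ => le_of_forall_gt_imp_ge_of_dense fun t ht =>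
      le_of_smul_le_mulVec_of_spectralRadius_lt hnonneg (hlt t ht) hX0 hX hμ
  refine ⟨?_, ⟨Y, hY, hY0, hYeig⟩, ⟨⟨hρ0, Y, hY, hY0, hYeig⟩, ?_⟩,
    ⟨⟨hρ0, Y, hY, hY0, fun i => (hYeig i).ge⟩, ?_⟩⟩
  · refine (IsGLB.csInf_eq ⟨fun μ hμ => ?_, fun b hb => ?_⟩ ?_).symm
    · obtain ⟨-, X, hX, hμX⟩ := hμ
      exact le_of_smul_le_mulVec_of_mulVec_le_smul hnonneg hu0 hu hρu hX hμX
    · exact le_of_forall_gt_imp_ge_of_dense fun t ht =>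
        hb ⟨hρ0.trans_lt ht, exists_pos_mulVec_le_smul hnonneg (hlt t ht)⟩
    · exact ⟨ρ + 1, by linarith, exists_pos_mulVec_le_smul hnonneg (hlt _ (by linarith))⟩
  · rintro μ ⟨-, X, hX, hX0, hμ⟩
    exact hsub μ X hX hX0 fun i => (hμ i).ge
  · rintro μ ⟨-, X, hX, hX0, hμ⟩
    exact hsub μ X hX hX0 hμ
end
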